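/- arXiv:1803.01172 — 2 statements merged into one kernel-verified Lean document; each statement's English description precedes it below -/
import Mathlib

section
/- Let G be a finite tree (a connected acyclic simple graph) on a finite vertex type V with at least two vertices, and let r be any vertex. Then there exists a closed walk w in G from r to r such that every edge of G occurs exactly twice among the edges of w, and every vertex v ∈ V occurs exactly G.degree v times in the tail of the support of w (the list of vertices of w with its first entry removed). -/
/-!
The Euler tour of a tree traverses every dart (oriented edge) exactly once. Deleting an edge `ru`
splits a forest into the component of `r` and that of `u`; the tour `r → u`, tour at `u`,
`u → r`, tour at `r` then covers every dart of the component of `r` once. Every edge carries two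
darts, every vertex `v` is the head of `deg v` darts, and the tail of the support of a walk lists
the heads of its darts.
-/

open Finset

theorem List.Nodup.countP_eq_card_filter {α : Type*} [Fintype α] {l : List α} (hl : l.Nodup)
    (hmem : ∀ x, x ∈ l) (p : α → Bool) : l.countP p = #{x | p x} := by
  classical
  rw [List.countP_eq_length_filter, ← List.toFinset_card_of_nodup (hl.filter _)]
  congr 1
  ext x
  simp [hmem]

namespace SimpleGraph

variable {V : Type*} {G : SimpleGraph V}

section Counting

variable [Fintype V] [DecidableEq V] [DecidableRel G.Adj]

theorem card_filter_dart_snd_eq_degree (v : V) : #{d : G.Dart | d.snd = v} = G.degree v := by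
  rw [← dart_fst_fiber_card_eq_degree]
  exact card_bij' (fun d _ => d.symm) (fun d _ => d.symm) (by simp) (by simp) (by simp) (by simp)

namespace Walk

variable {u v : V} {p : G.Walk u v}

theorem count_edges_eq_two_of_forall_mem_darts (hnd : p.darts.Nodup) (hmem : ∀ d, d ∈ p.darts)
    {e : Sym2 V} (he : e ∈ G.edgeSet) : p.edges.count e = 2 := by
  rw [edges, List.count_eq_countP, List.countP_map, hnd.countP_eq_card_filter hmem]
  simpa using G.dart_edge_fiber_card e he

theorem count_support_tail_eq_degree_of_forall_mem_darts (hnd : p.darts.Nodup)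
    (hmem : ∀ d, d ∈ p.darts) (x : V) : p.support.tail.count x = G.degree x := by
  rw [← map_snd_darts, List.count_eq_countP, List.countP_map, hnd.countP_eq_card_filter hmem]
  simpa using G.card_filter_dart_snd_eq_degree x

end Walk

end Counting

theorem Walk.map_toProd_darts_mapLe {H : SimpleGraph V} (h : G ≤ H) {u v : V} (p : G.Walk u v) :
    (p.mapLe h).darts.map Dart.toProd = p.darts.map Dart.toProd := by
  induction p <;> simp [*]

variable {r u x : V}

theorem Reachable.deleteEdges_or_of_adj (hru : G.Adj r u) (h : G.Reachable r x) :
    (G.deleteEdges {s(r, u)}).Reachable r x ∨ (G.deleteEdges {s(r, u)}).Reachable u x := by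
  rw [reachable_iff_reflTransGen] at h
  induction h with
  | refl => exact Or.inl .rfl
  | @tail b c _ hbc ih =>
    by_cases hbc' : s(b, c) = s(r, u)
    · rcases Sym2.eq_iff.mp hbc' with ⟨rfl, rfl⟩ | ⟨rfl, rfl⟩
      exacts [Or.inr .rfl, Or.inl .rfl]
    · have hD : (G.deleteEdges {s(r, u)}).Adj b c := by simp [hbc, hbc']
      exact ih.imp (·.trans hD.reachable) (·.trans hD.reachable)

/-- Darts are compared through `Dart.toProd`, so that the notion can be transported along
`Walk.mapLe`. -/
def Walk.IsComponentDartTour (w : G.Walk r r) : Prop :=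
  (w.darts.map Dart.toProd).Nodup ∧
    ∀ x y, (x, y) ∈ w.darts.map Dart.toProd ↔ G.Adj x y ∧ G.Reachable r x

theorem Walk.isComponentDartTour_nil (hr : ∀ u, ¬ G.Adj r u) :
    (Walk.nil : G.Walk r r).IsComponentDartTour := by
  refine ⟨List.nodup_nil, fun x y => ?_⟩
  simp only [darts_nil, List.map_nil, List.not_mem_nil, false_iff, not_and]
  rintro hxy ⟨p⟩
  cases p with
  | nil => exact hr y hxy
  | cons h _ => exact hr _ h

theorem Walk.IsComponentDartTour.cons_append_cons (hru : G.Adj r u)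
    (hbridge : ¬ (G.deleteEdges {s(r, u)}).Reachable r u)
    {w₁ : (G.deleteEdges {s(r, u)}).Walk r r} (h₁ : w₁.IsComponentDartTour)
    {w₂ : (G.deleteEdges {s(r, u)}).Walk u u} (h₂ : w₂.IsComponentDartTour) :
    (Walk.cons hru ((w₂.mapLe (deleteEdges_le _)).append
      (Walk.cons hru.symm (w₁.mapLe (deleteEdges_le _))))).IsComponentDartTour := by
  obtain ⟨hnd₁, hmem₁⟩ := h₁
  obtain ⟨hnd₂, hmem₂⟩ := h₂
  have hdarts : (Walk.cons hru ((w₂.mapLe (deleteEdges_le _)).append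
      (Walk.cons hru.symm (w₁.mapLe (deleteEdges_le _))))).darts.map Dart.toProd =
      (r, u) :: (w₂.darts.map Dart.toProd ++ (u, r) :: w₁.darts.map Dart.toProd) := by
    simp only [darts_cons, darts_append, List.map_cons, List.map_append, map_toProd_darts_mapLe]
  rw [IsComponentDartTour, hdarts]
  constructor
  · refine List.nodup_cons.2
      ⟨?_, List.nodup_append.2 ⟨hnd₂, List.nodup_cons.2 ⟨?_, hnd₁⟩, ?_⟩⟩
    · simp [hmem₁, hmem₂, hru.ne]
    · simp [hmem₁]
    · rintro ⟨x, y⟩ hx₂ _ hx rfl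
      rcases List.mem_cons.1 hx with hxy | hx₁
      · simp_all
      · exact hbridge (((hmem₁ x y).1 hx₁).2.trans ((hmem₂ x y).1 hx₂).2.symm)
  · have hsplit : ∀ {x}, G.Reachable r x ↔
        (G.deleteEdges {s(r, u)}).Reachable r x ∨ (G.deleteEdges {s(r, u)}).Reachable u x :=
      ⟨Reachable.deleteEdges_or_of_adj hru, fun h => h.elim (·.mono (deleteEdges_le _))
        (hru.reachable.trans <| ·.mono (deleteEdges_le _))⟩
    intro x y
    simp only [List.mem_append, List.mem_cons, Prod.mk.injEq, hmem₁, hmem₂, hsplit,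
      deleteEdges_adj, Set.mem_singleton_iff, Sym2.eq_iff]
    constructor
    · rintro (⟨rfl, rfl⟩ | ⟨⟨hxy, -⟩, hx⟩ | ⟨rfl, rfl⟩ | ⟨⟨hxy, -⟩, hx⟩)
      exacts [⟨hru, Or.inl .rfl⟩, ⟨hxy, Or.inr hx⟩, ⟨hru.symm, Or.inr .rfl⟩,
        ⟨hxy, Or.inl hx⟩]
    · rintro ⟨hxy, hx⟩
      by_cases hxy' : x = r ∧ y = u ∨ x = u ∧ y = r <;> tauto

theorem IsAcyclic.exists_isComponentDartTour [Finite V] (hG : G.IsAcyclic) (r : V) :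
    ∃ w : G.Walk r r, w.IsComponentDartTour := by
  induction G using WellFoundedLT.induction generalizing r with
  | ind G ih =>
    by_cases hr : ∃ u, G.Adj r u
    · obtain ⟨u, hru⟩ := hr
      have hlt : G.deleteEdges {s(r, u)} < G :=
        (deleteEdges_le _).lt_of_ne <| by simpa [deleteEdges_eq_self] using hru
      have hD := hG.anti (deleteEdges_le {s(r, u)})
      obtain ⟨w₁, h₁⟩ := ih _ hlt hD r
      obtain ⟨w₂, h₂⟩ := ih _ hlt hD u
      exact ⟨_, h₁.cons_append_cons hru (isAcyclic_iff_forall_adj_isBridge.1 hG hru) h₂⟩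
    · exact ⟨.nil, Walk.isComponentDartTour_nil (not_exists.1 hr)⟩

theorem IsTree.exists_walk_darts_nodup_forall_mem [Finite V] (hG : G.IsTree) (r : V) :
    ∃ w : G.Walk r r, w.darts.Nodup ∧ ∀ d, d ∈ w.darts := by
  obtain ⟨w, hnd, hmem⟩ := hG.isAcyclic.exists_isComponentDartTour r
  refine ⟨w, hnd.of_map _, fun d => ?_⟩
  obtain ⟨d', hd', hdd'⟩ := List.mem_map.1 <|
    (hmem d.fst d.snd).2 ⟨d.adj, hG.connected.preconnected r d.fst⟩
  rwa [← Dart.ext _ _ hdd']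

end SimpleGraph

theorem tree_euler_tour_degree_visits_general {V : Type*} [Fintype V] [DecidableEq V]
    (G : SimpleGraph V) [DecidableRel G.Adj]
    (hT : G.IsTree) (r : V) :
    ∃ w : G.Walk r r,
      (∀ e ∈ G.edgeSet, w.edges.count e = 2) ∧
      ∀ v : V, w.support.tail.count v = G.degree v := by
  obtain ⟨w, hnd, hmem⟩ := hT.exists_walk_darts_nodup_forall_mem r
  exact ⟨w, fun e he => w.count_edges_eq_two_of_forall_mem_darts hnd hmem he,
    w.count_support_tail_eq_degree_of_forall_mem_darts hnd hmem⟩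

/-- The Euler tour of a finite tree `G` with at least two vertices traverses
every edge exactly twice and visits each vertex `v` exactly `G.degree v` times
(counted in the tail of the support of the walk). -/
theorem tree_euler_tour_degree_visits {V : Type*} [Fintype V] [DecidableEq V]
    (G : SimpleGraph V) [DecidableRel G.Adj]
    (hT : G.IsTree) (hV : 2 ≤ Fintype.card V) (r : V) :
    ∃ w : G.Walk r r,
      (∀ e ∈ G.edgeSet, w.edges.count e = 2) ∧
      ∀ v : V, w.support.tail.count v = G.degree v :=
  tree_euler_tour_degree_visits_general G hT r
end

section
/- Let n ≥ 2 and let f : ZMod n → Bool be a cyclic word. Suppose the number a of positions i with f i = true satisfies a ≥ 1, and suppose the set of positions with f i = false is nonempty and forms a contiguous cyclic arc, i.e., there exist s : ZMod n and a natural number b with 1 ≤ b ≤ n − 1 such that { i : f i = false } = { s + k : k ∈ Fin b }. Then the number of positions i with f i = true and f (i+1) = true equals a − 1. -/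
/-- In a cyclic boolean word of length `n ≥ 2` with `a ≥ 1` occurrences of
`true`, if the positions carrying `false` are nonempty and form a contiguous
cyclic arc, then the number of positions `i` with `f i = true` and
`f (i+1) = true` equals `a - 1`. -/
theorem crosswalk_count (n : ℕ) [NeZero n] (hn : 2 ≤ n) (f : ZMod n → Bool)
    (a : ℕ) (ha : a = (Finset.univ.filter (fun i : ZMod n => f i = true)).card)
    (ha1 : 1 ≤ a)
    (harc : ∃ (s : ZMod n) (b : ℕ), 1 ≤ b ∧ b ≤ n - 1 ∧
      {i : ZMod n | f i = false} = {i : ZMod n | ∃ k : Fin b, i = s + ((k : ℕ) : ZMod n)}) :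
    (Finset.univ.filter (fun i : ZMod n => f i = true ∧ f (i + 1) = true)).card = a - 1 := by
  obtain ⟨s, b, hb1, hb2, hset⟩ := harc
  haveI : Fact (1 < n) := ⟨by omega⟩
  have hbn : b < n := by omega
  have hfalse : ∀ i : ZMod n, f i = false ↔ ∃ k : Fin b, i = s + ((k : ℕ) : ZMod n) := by
    intro i
    exact Set.ext_iff.mp hset i
  have hkey : ∀ i : ZMod n, f i = true ↔ b ≤ (i - s).val := by
    intro i
    constructor
    · intro h
      by_contra hc
      push_neg at hc
      have hmem : ∃ k : Fin b, i = s + ((k : ℕ) : ZMod n) := by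
        refine ⟨⟨(i - s).val, hc⟩, ?_⟩
        simp [ZMod.natCast_val, ZMod.natCast_rightInverse _]
      have := (hfalse i).2 hmem
      simp [this] at h
    · intro h
      cases hf : f i with
      | true => rfl
      | false =>
        obtain ⟨k, hk⟩ := (hfalse i).1 hf
        have hv : (i - s).val = (k : ℕ) := by
          rw [hk, add_sub_cancel_left]
          exact ZMod.val_cast_of_lt (lt_trans k.2 hbn)
        have := k.2
        omega
  have hvlt : ∀ i : ZMod n, (i - s).val < n := fun i => ZMod.val_lt _
  -- count of trues
  have hA : a = n - b := by
    rw [ha]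
    have hc : (Finset.univ.filter (fun i : ZMod n => f i = true)).card
        = (Finset.Ico b n).card := by
      apply Finset.card_bij' (fun i _ => (i - s).val)
        (fun k _ => s + (k : ZMod n))
      · intro i hi
        simp only [Finset.mem_filter] at hi
        simp [Finset.mem_Ico, (hkey i).1 hi.2, hvlt i]
      · intro k hk
        simp only [Finset.mem_Ico] at hk
        simp only [Finset.mem_filter, Finset.mem_univ, true_and]
        rw [hkey, add_sub_cancel_left, ZMod.val_cast_of_lt hk.2]
        exact hk.1
      · intro i hi
        simp [ZMod.natCast_rightInverse _]
      · intro k hk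
        simp only [Finset.mem_Ico] at hk
        rw [add_sub_cancel_left, ZMod.val_cast_of_lt hk.2]
    rw [hc, Nat.card_Ico]
  -- count of pairs
  have hsucc : ∀ i : ZMod n, (i + 1 - s).val = ((i - s).val + 1) % n := by
    intro i
    have he : i + 1 - s = (i - s) + 1 := by ring
    rw [he, ZMod.val_add, ZMod.val_one]
  have hc2 : (Finset.univ.filter (fun i : ZMod n => f i = true ∧ f (i + 1) = true)).card
      = (Finset.Ico b (n - 1)).card := by
    apply Finset.card_bij' (fun i _ => (i - s).val)
      (fun k _ => s + (k : ZMod n))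
    · intro i hi
      simp only [Finset.mem_filter, Finset.mem_univ, true_and] at hi
      have h1 := (hkey i).1 hi.1
      have h2 := (hkey (i + 1)).1 hi.2
      rw [hsucc] at h2
      have hlt := hvlt i
      simp only [Finset.mem_Ico]
      constructor
      · exact h1
      · by_contra hc
        push_neg at hc
        have hje : (i - s).val = n - 1 := by omega
        rw [hje] at h2
        have : (n - 1 + 1) % n = 0 := by
          have : n - 1 + 1 = n := by omega
          rw [this, Nat.mod_self]
        omega
    · intro k hk
      simp only [Finset.mem_Ico] at hk
      have hkn : k < n := by omega
      simp only [Finset.mem_filter, Finset.mem_univ, true_and]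
      constructor
      · rw [hkey, add_sub_cancel_left, ZMod.val_cast_of_lt hkn]
        exact hk.1
      · rw [hkey, hsucc, add_sub_cancel_left, ZMod.val_cast_of_lt hkn,
          Nat.mod_eq_of_lt (by omega)]
        omega
    · intro i hi
      simp [ZMod.natCast_rightInverse _]
    · intro k hk
      simp only [Finset.mem_Ico] at hk
      rw [add_sub_cancel_left, ZMod.val_cast_of_lt (by omega)]
  rw [hc2, Nat.card_Ico]
  omega
end
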